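/- arXiv:1710.04514 — 2 statements merged into one kernel-verified Lean document; each statement's English description precedes it below -/
import Mathlib

section
/- Uniform lower bound lemma: let f : M₁ → M₂ be continuous, x_n → x in M₁, and ε_n → ε > 0 with ε_n ∈ E_f(x_n) and ε ∈ E_f(x). Setting δ_n = max Δ_{f,x_n}(ε_n), there exists M > 0 such that δ_n ≥ M for all n. -/
/-- The set of suitable deltas for the triplet `(f, x, ε)`. -/
def Delta {X Y : Type*} [MetricSpace X] [MetricSpace Y] (f : X → Y) (x : X) (ε : ℝ) : Set ℝ :=
  {δ : ℝ | 0 < δ ∧ ∀ y, dist x y < δ → dist (f x) (f y) < ε}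

/-- `ε ∈ E_f(x)`: the set of suitable deltas is nonempty and bounded. -/
def memE {X Y : Type*} [MetricSpace X] [MetricSpace Y] (f : X → Y) (x : X) (ε : ℝ) : Prop :=
  0 < ε ∧ (Delta f x ε).Nonempty ∧ BddAbove (Delta f x ε)

theorem delta_uniform_lower_bound {X Y : Type*} [MetricSpace X] [MetricSpace Y]
    (f : X → Y) (hf : Continuous f)
    (x : ℕ → X) (x₀ : X) (hx : Filter.Tendsto x Filter.atTop (nhds x₀))
    (ε : ℕ → ℝ) (ε₀ : ℝ) (hε₀ : 0 < ε₀)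
    (hε : Filter.Tendsto ε Filter.atTop (nhds ε₀))
    (hεE : ∀ n, memE f (x n) (ε n)) (hε₀E : memE f x₀ ε₀)
    (δ : ℕ → ℝ) (hδ : ∀ n, IsGreatest (Delta f (x n) (ε n)) (δ n)) :
    ∃ M : ℝ, 0 < M ∧ ∀ n, M ≤ δ n := by
  -- continuity of f at x₀ with ε₀/4
  have hc := Metric.continuousAt_iff.mp (hf.continuousAt (x := x₀))
  obtain ⟨d, hd, hdball⟩ := hc (ε₀/4) (by linarith)
  -- eventually dist (x n) x₀ < d/2
  have h1 : ∀ᶠ n in Filter.atTop, dist (x n) x₀ < d/2 := by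
    have := Metric.tendsto_atTop.mp hx (d/2) (by linarith)
    exact Filter.eventually_atTop.mpr this
  -- eventually ε n > ε₀/2
  have h2 : ∀ᶠ n in Filter.atTop, ε₀/2 < ε n :=
    hε.eventually (eventually_gt_nhds (by linarith))
  obtain ⟨N, hN⟩ := Filter.eventually_atTop.mp (h1.and h2)
  -- for n ≥ N, d/2 ∈ Delta f (x n) (ε n)
  have key : ∀ n ≥ N, d/2 ≤ δ n := by
    intro n hn
    obtain ⟨hd1, hd2⟩ := hN n hn
    refine (hδ n).2 ⟨by linarith, fun y hy => ?_⟩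
    have hy0 : dist y x₀ < d := by
      have := dist_triangle y (x n) x₀
      rw [dist_comm y (x n)] at this
      linarith
    have hb1 : dist (f y) (f x₀) < ε₀/4 := hdball hy0
    have hb2 : dist (f (x n)) (f x₀) < ε₀/4 := hdball (by linarith [hd1])
    have := dist_triangle (f (x n)) (f x₀) (f y)
    rw [dist_comm (f x₀) (f y)] at this
    linarith
  -- minimum over first N+1 values
  have hpos : ∀ n, 0 < δ n := fun n => (hδ n).1.1
  set m := (Finset.range (N+1)).inf' (by simp) δ with hm
  have hmpos : 0 < m := by
    rw [Finset.lt_inf'_iff]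
    intro i _
    exact hpos i
  refine ⟨min (d/2) m, lt_min (by linarith) hmpos, fun n => ?_⟩
  rcases le_or_gt N n with h | h
  · exact le_trans (min_le_left _ _) (key n h)
  · exact le_trans (min_le_right _ _)
      (Finset.inf'_le δ (Finset.mem_range.mpr (by omega)))
end

section
/- Lagrange Property from nondegenerate C² data: if U ⊆ ℝ is open, f : U → ℝ is C², and f'(x) f''(x) ≠ 0, then there exists ζ > 0 and a C¹ function Γ : (−ζ,ζ) → ℝ such that for all r ∈ (0,ζ), Γ(r) = sup_{0 < |y−x| ≤ r} |f(x)−f(y)|/|x−y|, and this supremum is attained at some point y_r with 0 < |y_r − x| ≤ r. -/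
/-- The set of Leibniz-ratio values of `f` at `x` over the punctured closed ball of radius `r`. -/
def ratioSet (f : ℝ → ℝ) (x r : ℝ) : Set ℝ :=
  {L : ℝ | ∃ y, 0 < |y - x| ∧ |y - x| ≤ r ∧ L = |f x - f y| / |x - y|}

open Set Filter Topology Metric

/-!
After replacing `f` by `z ↦ σ f(x + s z)` for suitable signs `σ, s ∈ {±1}`, which does not
change the Leibniz ratios, we may assume `f'(x) > 0` and `f''(x) > 0`. Then `f` is increasing
and convex near `x`, so by monotonicity of secant slopes the ratio over `0 < |y - x| ≤ r` is
largest at `y = x + r`, i.e. `Γ(r) = dslope f x (x + r)`. Writing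
`dslope f x y = ∫₀¹ f'(x + t (y - x)) dt` and differentiating under the integral sign shows that
`dslope f x` is `C¹`. A bump function first makes `f` globally `C²` without changing it near `x`.
-/

theorem exists_contDiff_eventuallyEq_of_contDiffOn {E F : Type*} [NormedAddCommGroup E]
    [NormedSpace ℝ E] [HasContDiffBump E] [NormedAddCommGroup F] [NormedSpace ℝ F]
    {n : ℕ∞} {U : Set E} {f : E → F} {x : E} (hU : IsOpen U) (hf : ContDiffOn ℝ n f U)
    (hx : x ∈ U) : ∃ g : E → F, ContDiff ℝ n g ∧ g =ᶠ[𝓝 x] f := by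
  obtain ⟨δ, hδ, hball⟩ := Metric.isOpen_iff.mp hU x hx
  let χ : ContDiffBump x := ⟨δ / 4, δ / 2, by positivity, by linarith⟩
  refine ⟨fun z => χ z • f z, contDiff_iff_contDiffAt.mpr fun z => ?_, ?_⟩
  · by_cases hz : z ∈ U
    · exact χ.contDiffAt.smul (hf.contDiffAt (hU.mem_nhds hz))
    · have hχ : z ∉ tsupport χ := by
        rw [χ.tsupport_eq]
        exact fun hz' => hz (hball (closedBall_subset_ball (show δ / 2 < δ by linarith) hz'))
      refine (contDiffAt_const (c := (0 : F))).congr_of_eventuallyEq ?_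
      filter_upwards [notMem_tsupport_iff_eventuallyEq.mp hχ] with w hw
      simp [hw]
  · filter_upwards [χ.eventuallyEq_one] with w hw
    simp [hw]

section DSlope

variable {E : Type*} [NormedAddCommGroup E] [NormedSpace ℝ E]

theorem deriv_comp_const_add_mul {φ : ℝ → E} (hφ : Differentiable ℝ φ) (x s : ℝ) :
    deriv (fun z => φ (x + s * z)) = fun z => s • deriv φ (x + s * z) := by
  funext z
  have hin : HasDerivAt (fun z : ℝ => x + s * z) s z := by
    simpa using ((hasDerivAt_id z).const_mul s).const_add x
  exact ((hφ _).hasDerivAt.scomp z hin).deriv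

theorem hasDerivAt_integral_comp_const_add_mul {φ : ℝ → E} (hφ : ContDiff ℝ 1 φ) (a q : ℝ) :
    HasDerivAt (fun q => ∫ t in (0 : ℝ)..1, φ (a + t * q))
      (∫ t in (0 : ℝ)..1, t • deriv φ (a + t * q)) q := by
  have hφc : Continuous φ := hφ.continuous
  have hφ'c : Continuous (deriv φ) := hφ.continuous_deriv le_rfl
  obtain ⟨M, hM⟩ := (isCompact_closedBall a (|q| + 1)).exists_bound_of_continuousOn
    hφ'c.continuousOn
  have hmem : ∀ t ∈ uIoc (0 : ℝ) 1, ∀ r ∈ ball q 1,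
      a + t * r ∈ closedBall a (|q| + 1) := by
    intro t ht r hr
    rw [uIoc_of_le zero_le_one] at ht
    rw [mem_closedBall, Real.dist_eq, add_sub_cancel_left, abs_mul, abs_of_pos ht.1]
    have hr' : |r| ≤ |q| + 1 := by
      rw [mem_ball, Real.dist_eq] at hr
      linarith [abs_sub_abs_le_abs_sub r q]
    nlinarith [abs_nonneg r, ht.2]
  have hcont : ∀ r, Continuous fun t : ℝ => φ (a + t * r) := fun r => by fun_prop
  refine (intervalIntegral.hasDerivAt_integral_of_dominated_loc_of_deriv_le
    (F := fun r t => φ (a + t * r)) (F' := fun r t => t • deriv φ (a + t * r))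
    (bound := fun _ => M) (ball_mem_nhds q one_pos)
    (Eventually.of_forall fun r => (hcont r).aestronglyMeasurable)
    ((hcont q).intervalIntegrable _ _)
    ((by fun_prop : Continuous fun t : ℝ => t • deriv φ (a + t * q)).aestronglyMeasurable)
    (MeasureTheory.ae_of_all _ fun t ht r hr => ?_) intervalIntegrable_const
    (MeasureTheory.ae_of_all _ fun t ht r hr => ?_)).2
  · obtain ⟨ht₀, ht₁⟩ : t ∈ Ioc 0 1 := by rwa [uIoc_of_le zero_le_one] at ht
    calc ‖t • deriv φ (a + t * r)‖ = t * ‖deriv φ (a + t * r)‖ := by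
          rw [norm_smul, Real.norm_eq_abs, abs_of_pos ht₀]
      _ ≤ 1 * M := mul_le_mul ht₁ (hM _ (hmem t ht r hr)) (norm_nonneg _) zero_le_one
      _ = M := one_mul M
  · have hin : HasDerivAt (fun r : ℝ => a + t * r) t r := by
      simpa using ((hasDerivAt_id r).const_mul t).const_add a
    exact ((hφ.differentiable one_ne_zero _).hasDerivAt).scomp r hin

theorem contDiff_integral_comp_const_add_mul {φ : ℝ → E} (hφ : ContDiff ℝ 1 φ) (a : ℝ) :
    ContDiff ℝ 1 (fun q => ∫ t in (0 : ℝ)..1, φ (a + t * q)) := by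
  have hderiv := hasDerivAt_integral_comp_const_add_mul hφ a
  refine contDiff_one_iff_deriv.mpr ⟨fun q => (hderiv q).differentiableAt, ?_⟩
  rw [funext fun q => (hderiv q).deriv]
  have hφ'c : Continuous (deriv φ) := hφ.continuous_deriv le_rfl
  exact intervalIntegral.continuous_parametric_intervalIntegral_of_continuous'
    (by fun_prop) 0 1

variable [CompleteSpace E]

theorem dslope_eq_integral_deriv {g : ℝ → E} (hg : ContDiff ℝ 1 g) (a b : ℝ) :
    dslope g a b = ∫ t in (0 : ℝ)..1, deriv g (a + t * (b - a)) := by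
  rcases eq_or_ne b a with rfl | hba
  · simp [dslope_same]
  have hftc : ∫ u in a..b, deriv g u = g b - g a :=
    intervalIntegral.integral_deriv_eq_sub (fun u _ => hg.differentiable one_ne_zero u)
      ((hg.continuous_deriv le_rfl).intervalIntegrable _ _)
  rw [dslope_of_ne _ hba, slope_def_module, ← hftc]
  simpa [mul_comm, add_comm] using
    (intervalIntegral.integral_comp_mul_add (a := 0) (b := 1) (deriv g)
      (sub_ne_zero.mpr hba) a).symm

theorem contDiff_dslope {g : ℝ → E} (hg : ContDiff ℝ 2 g) (a : ℝ) :
    ContDiff ℝ 1 (dslope g a) := by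
  have h : dslope g a = (fun q => ∫ t in (0 : ℝ)..1, deriv g (a + t * q)) ∘ fun b => b - a :=
    funext (dslope_eq_integral_deriv (hg.of_le one_le_two) a)
  rw [h]
  exact (contDiff_integral_comp_const_add_mul (hg.deriv' (n := 1)) a).comp
    (contDiff_id.sub contDiff_const)

end DSlope

theorem exists_abs_eq_one_mul_pos {a : ℝ} (ha : a ≠ 0) : ∃ σ : ℝ, |σ| = 1 ∧ 0 < σ * a :=
  ⟨Real.sign a, by rcases Real.sign_apply_eq_of_ne_zero a ha with h | h <;> simp [h],
    Real.sign_mul_pos_of_ne_zero a ha⟩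

theorem ratioSet_congr {f g : ℝ → ℝ} {x r : ℝ} (h : EqOn f g (closedBall x r)) :
    ratioSet f x r = ratioSet g x r := by
  ext L
  constructor <;> rintro ⟨y, hy0, hyr, rfl⟩ <;> refine ⟨y, hy0, hyr, ?_⟩ <;>
  · have hy : y ∈ closedBall x r := by rwa [mem_closedBall, Real.dist_eq]
    have hx : x ∈ closedBall x r := mem_closedBall_self (hy0.le.trans hyr)
    simp [h hx, h hy]

theorem ratioSet_const_mul_comp_const_add_mul {g : ℝ → ℝ} {σ s : ℝ} (hσ : |σ| = 1)
    (hs : |s| = 1) (x r : ℝ) : ratioSet (fun z => σ * g (x + s * z)) 0 r = ratioSet g x r := by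
  have hdist : ∀ y, |x + s * y - x| = |y - 0| := by simp [abs_mul, hs]
  have hratio : ∀ y, |σ * g (x + s * 0) - σ * g (x + s * y)| / |0 - y|
      = |g x - g (x + s * y)| / |x - (x + s * y)| := by
    intro y
    simp [← mul_sub, abs_mul, hσ, hs]
  have hss : s * s = 1 := by rw [← abs_mul_abs_self, hs, one_mul]
  have hinv : ∀ y, x + s * (s * (y - x)) = y := fun y => by linear_combination (y - x) * hss
  ext L
  constructor
  · rintro ⟨y, hy0, hyr, rfl⟩
    exact ⟨x + s * y, by rwa [hdist], by rwa [hdist], hratio y⟩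
  · rintro ⟨y, hy0, hyr, rfl⟩
    refine ⟨s * (y - x), ?_, ?_, ?_⟩
    · rwa [← hdist, hinv]
    · rwa [← hdist, hinv]
    · rw [hratio, hinv]

theorem isGreatest_ratioSet_slope_of_convexOn {f : ℝ → ℝ} {a r : ℝ} (hr : 0 < r)
    (hconv : ConvexOn ℝ (Icc (a - r) (a + r)) f)
    (hmono : MonotoneOn f (Icc (a - r) (a + r))) :
    IsGreatest (ratioSet f a r) (slope f a (a + r)) := by
  have ha : a ∈ Icc (a - r) (a + r) := ⟨by linarith, by linarith⟩
  have hratio : ∀ y ∈ Icc (a - r) (a + r), |f a - f y| / |a - y| = slope f a y := by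
    intro y hy
    have hnonneg : 0 ≤ (f y - f a) / (y - a) := by
      rcases le_total y a with hya | hay
      · exact div_nonneg_of_nonpos (sub_nonpos.mpr (hmono hy ha hya)) (sub_nonpos.mpr hya)
      · exact div_nonneg (sub_nonneg.mpr (hmono ha hy hay)) (sub_nonneg.mpr hay)
    rw [slope_def_field, ← abs_of_nonneg hnonneg, abs_div, abs_sub_comm (f a), abs_sub_comm a]
  have hend : a + r ∈ Icc (a - r) (a + r) := ⟨by linarith, le_rfl⟩
  refine ⟨⟨a + r, by simpa [abs_of_pos hr], by simp [abs_of_pos hr], (hratio _ hend).symm⟩, ?_⟩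
  rintro _ ⟨y, hy0, hyr, rfl⟩
  have hy : y ∈ Icc (a - r) (a + r) := by
    constructor <;> linarith [abs_le.mp hyr]
  rw [hratio y hy, slope_def_field, slope_def_field]
  exact hconv.secant_mono ha hy hend (by rintro rfl; simp at hy0) (by linarith) hy.2

theorem exists_isGreatest_ratioSet_dslope_of_deriv_pos {g : ℝ → ℝ} {a : ℝ}
    (hg : ContDiff ℝ 2 g) (h₁ : 0 < deriv g a) (h₂ : 0 < deriv (deriv g) a) :
    ∃ ζ > 0, ∀ r ∈ Ioo 0 ζ, IsGreatest (ratioSet g a r) (dslope g a (a + r)) := by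
  have hg₁ : Continuous (deriv g) := hg.continuous_deriv one_le_two
  have hg₂ : Continuous (deriv (deriv g)) := (hg.deriv' (n := 1)).continuous_deriv le_rfl
  obtain ⟨ζ, hζ, hpos⟩ := eventually_nhds_iff_ball.mp
    (((hg₁.tendsto a).eventually (lt_mem_nhds h₁)).and
      ((hg₂.tendsto a).eventually (lt_mem_nhds h₂)))
  refine ⟨ζ, hζ, fun r hr => ?_⟩
  have hsub : interior (Icc (a - r) (a + r)) ⊆ ball a ζ := by
    rw [← Real.closedBall_eq_Icc]
    exact interior_subset.trans (closedBall_subset_ball hr.2)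
  rw [dslope_of_ne _ (by linarith [hr.1] : a + r ≠ a)]
  apply isGreatest_ratioSet_slope_of_convexOn hr.1
  · exact convexOn_of_deriv2_nonneg (convex_Icc _ _) hg.continuous.continuousOn
      (hg.differentiable two_ne_zero).differentiableOn
      hg.differentiable_deriv_two.differentiableOn fun z hz => (hpos z (hsub hz)).2.le
  · exact monotoneOn_of_deriv_nonneg (convex_Icc _ _) hg.continuous.continuousOn
      (hg.differentiable two_ne_zero).differentiableOn fun z hz => (hpos z (hsub hz)).1.le

theorem exists_contDiff_isGreatest_ratioSet {g : ℝ → ℝ} {x : ℝ} (hg : ContDiff ℝ 2 g)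
    (hnd : deriv g x * deriv (deriv g) x ≠ 0) :
    ∃ ζ > 0, ∃ Γ : ℝ → ℝ, ContDiff ℝ 1 Γ ∧
      ∀ r ∈ Ioo 0 ζ, IsGreatest (ratioSet g x r) (Γ r) := by
  obtain ⟨σ, hσ, hσg''⟩ := exists_abs_eq_one_mul_pos (right_ne_zero_of_mul hnd)
  have hσ₀ : σ ≠ 0 := by rintro rfl; simp at hσ
  obtain ⟨s, hs, hsσg'⟩ :=
    exists_abs_eq_one_mul_pos (mul_ne_zero hσ₀ (left_ne_zero_of_mul hnd))
  have hss : s * s = 1 := by rw [← abs_mul_abs_self, hs, one_mul]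
  set h : ℝ → ℝ := fun z => σ * g (x + s * z)
  have hh : ContDiff ℝ 2 h := contDiff_const.mul (hg.comp (by fun_prop))
  have hh' : deriv h = fun z => σ * (s * deriv g (x + s * z)) := by
    simp only [h, deriv_const_mul_field', deriv_comp_const_add_mul (hg.differentiable two_ne_zero),
      smul_eq_mul]
  have hh'' : deriv (deriv h) 0 = σ * (s * (s * deriv (deriv g) x)) := by
    simp only [hh', deriv_const_mul_field', deriv_comp_const_add_mul hg.differentiable_deriv_two,
      smul_eq_mul, mul_zero, add_zero]
  obtain ⟨ζ, hζ, hmax⟩ := exists_isGreatest_ratioSet_dslope_of_deriv_pos (a := 0) hh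
    (by rw [hh']; simpa [mul_left_comm σ] using hsσg')
    (by rw [hh'', ← mul_assoc s, hss, one_mul]; exact hσg'')
  refine ⟨ζ, hζ, dslope h 0, contDiff_dslope hh 0, fun r hr => ?_⟩
  simpa [h, ratioSet_const_mul_comp_const_add_mul hσ hs] using hmax r hr

theorem lagrange_property_of_C2 (U : Set ℝ) (hU : IsOpen U) (f : ℝ → ℝ)
    (hf : ContDiffOn ℝ 2 f U) (x : ℝ) (hx : x ∈ U)
    (hnd : deriv f x * deriv (deriv f) x ≠ 0) :
    ∃ ζ > 0, Metric.closedBall x ζ ⊆ U ∧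
      ∃ Γ : ℝ → ℝ, ContDiffOn ℝ 1 Γ (Set.Ioo (-ζ) ζ) ∧
        ∀ r ∈ Set.Ioo (0 : ℝ) ζ, IsGreatest (ratioSet f x r) (Γ r) := by
  obtain ⟨g, hg, hgf⟩ := exists_contDiff_eventuallyEq_of_contDiffOn (n := 2) hU hf hx
  have hndg : deriv g x * deriv (deriv g) x ≠ 0 := by
    rwa [hgf.deriv_eq, hgf.deriv.deriv_eq]
  obtain ⟨ζ₁, hζ₁, Γ, hΓ, hmax⟩ := exists_contDiff_isGreatest_ratioSet hg hndg
  obtain ⟨ζ₂, hζ₂, hball⟩ := Metric.mem_nhds_iff.mp (hgf.and (hU.mem_nhds hx))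
  have hsub : closedBall x (min ζ₁ (ζ₂ / 2)) ⊆ ball x ζ₂ :=
    closedBall_subset_ball ((min_le_right _ _).trans_lt (half_lt_self hζ₂))
  refine ⟨min ζ₁ (ζ₂ / 2), by positivity, fun z hz => (hball (hsub hz)).2, Γ, hΓ.contDiffOn,
    fun r hr => ?_⟩
  have hfg : EqOn f g (closedBall x r) := fun z hz =>
    (hball (hsub (closedBall_subset_closedBall hr.2.le hz))).1.symm
  rw [ratioSet_congr hfg]
  exact hmax r ⟨hr.1, hr.2.trans_le (min_le_left _ _)⟩
end
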